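/- Let A →h B ∨ C → D be a homotopy cofibration of simply connected pointed CW-complexes. If the composition of h with the pinch map p₁ : B ∨ C → B onto the first wedge summand is null homotopic, then B is a homotopy retract of D; that is, there exist maps B → D and D → B whose composite B → D → B is homotopic to the identity. -/

import Mathlib

open CategoryTheory AlgebraicTopology unitInterval

noncomputable section

/-! ## Pointed topological spaces -/

/-- A pointed topological space. -/
structure PSp : Type 1 where
  carrier : Type
  [tp : TopologicalSpace carrier]
  pt : carrier

attribute [instance] PSp.tp

instance : CoeSort PSp Type := ⟨PSp.carrier⟩

/-- A pointed continuous map. -/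
@[ext] structure PMap (A B : PSp) where
  toFun : A → B
  cont : Continuous toFun
  map_pt : toFun A.pt = B.pt

/-- The underlying continuous map of a pointed map. -/
def PMap.toC {A B : PSp} (f : PMap A B) : C(A, B) := ⟨f.toFun, f.cont⟩

def PMap.id (A : PSp) : PMap A A := ⟨fun a => a, continuous_id, rfl⟩

def PMap.comp {A B C : PSp} (g : PMap B C) (f : PMap A B) : PMap A C :=
  ⟨g.toFun ∘ f.toFun, g.cont.comp f.cont, by simp [f.map_pt, g.map_pt]⟩

/-- The constant pointed map. -/
def PMap.const (A B : PSp) : PMap A B := ⟨fun _ => B.pt, continuous_const, rfl⟩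

/-- Pointed (based) homotopy: homotopy relative to the basepoint. -/
def PHomotopic {A B : PSp} (f g : PMap A B) : Prop :=
  ContinuousMap.HomotopicRel f.toC g.toC {A.pt}

theorem PHomotopic.refl {A B : PSp} (f : PMap A B) : PHomotopic f f :=
  ContinuousMap.HomotopicRel.refl _

/-- A pointed map is a pointed homotopy equivalence. -/
def IsPHEquiv {A B : PSp} (f : PMap A B) : Prop :=
  ∃ g : PMap B A, PHomotopic (g.comp f) (PMap.id A) ∧ PHomotopic (f.comp g) (PMap.id B)

theorem isPHEquiv_id {A : PSp} : IsPHEquiv (PMap.id A) :=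
  ⟨PMap.id A, PHomotopic.refl _, PHomotopic.refl _⟩

/-- Two pointed spaces are (pointed) homotopy equivalent. -/
def PHEquiv (A B : PSp) : Prop := ∃ f : PMap A B, IsPHEquiv f

/-- `f` admits a right homotopy inverse. -/
def HasRightHtpyInv {A B : PSp} (f : PMap A B) : Prop :=
  ∃ s : PMap B A, PHomotopic (f.comp s) (PMap.id B)

/-- `f` admits a left homotopy inverse. -/
def HasLeftHtpyInv {A B : PSp} (f : PMap A B) : Prop :=
  ∃ k : PMap B A, PHomotopic (k.comp f) (PMap.id A)

/-- The one-point pointed space. -/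
def PSpPt : PSp := ⟨PUnit, PUnit.unit⟩

/-- The product of pointed spaces. -/
def PSp.prod (A B : PSp) : PSp := ⟨A × B, (A.pt, B.pt)⟩

/-! ## Loop spaces -/

/-- The underlying type of the based loop space. -/
abbrev LoopsType (A : PSp) : Type := {γ : C(unitInterval, A.carrier) // γ 0 = A.pt ∧ γ 1 = A.pt}

/-- The based loop space `Ω A`. -/
def Loops (A : PSp) : PSp :=
  ⟨LoopsType A, ⟨ContinuousMap.const _ A.pt, rfl, rfl⟩⟩

/-- Functoriality of the based loop space. -/
def Loops.map {A B : PSp} (f : PMap A B) : PMap (Loops A) (Loops B) where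
  toFun := fun γ => show LoopsType B from
    ⟨f.toC.comp γ.1, by
      constructor
      · show f.toFun (γ.1 0) = B.pt
        rw [γ.2.1, f.map_pt]
      · show f.toFun (γ.1 1) = B.pt
        rw [γ.2.2, f.map_pt]⟩
  cont := by
    apply Continuous.subtype_mk
    exact (ContinuousMap.continuous_postcomp f.toC).comp continuous_subtype_val
  map_pt := by
    apply Subtype.ext
    ext t
    show f.toFun A.pt = B.pt
    exact f.map_pt

/-! ## Wedge sums -/

/-- The defining relation for the wedge sum. -/
inductive wedgeRel (A B : PSp) : (A.carrier ⊕ B.carrier) → (A.carrier ⊕ B.carrier) → Prop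
  | glue : wedgeRel A B (Sum.inl A.pt) (Sum.inr B.pt)

/-- The wedge sum `A ∨ B` of pointed spaces. -/
def Wedge (A B : PSp) : PSp := ⟨Quot (wedgeRel A B), Quot.mk _ (Sum.inl A.pt)⟩

/-- Inclusion of the first wedge summand. -/
def Wedge.inl (A B : PSp) : PMap A (Wedge A B) :=
  ⟨fun a => Quot.mk _ (Sum.inl a), continuous_quot_mk.comp continuous_inl, rfl⟩

/-- Inclusion of the second wedge summand. -/
def Wedge.inr (A B : PSp) : PMap B (Wedge A B) :=
  ⟨fun b => Quot.mk _ (Sum.inr b), continuous_quot_mk.comp continuous_inr,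
    (Quot.sound (wedgeRel.glue)).symm⟩

/-- The pinch map `A ∨ B → A` onto the first wedge summand. -/
def Wedge.p1 (A B : PSp) : PMap (Wedge A B) A where
  toFun := Quot.lift (Sum.elim _root_.id fun _ => A.pt)
    (by rintro _ _ ⟨⟩; rfl)
  cont := continuous_quot_lift _ (continuous_id.sumElim continuous_const)
  map_pt := rfl

/-- The pinch map `A ∨ B → B` onto the second wedge summand. -/
def Wedge.p2 (A B : PSp) : PMap (Wedge A B) B where
  toFun := Quot.lift (Sum.elim (fun _ => B.pt) _root_.id)
    (by rintro _ _ ⟨⟩; rfl)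
  cont := continuous_quot_lift _ (continuous_const.sumElim continuous_id)
  map_pt := rfl

/-- The wedge of two pointed maps, `f ∨ g`. -/
def Wedge.map {A B X Y : PSp} (f : PMap A X) (g : PMap B Y) :
    PMap (Wedge A B) (Wedge X Y) where
  toFun := Quot.lift (fun s => Quot.mk _ (Sum.map f.toFun g.toFun s))
    (by rintro _ _ ⟨⟩
        show Quot.mk _ (Sum.inl (f.toFun A.pt)) = Quot.mk _ (Sum.inr (g.toFun B.pt))
        rw [f.map_pt, g.map_pt]
        exact Quot.sound wedgeRel.glue)
  cont := continuous_quot_lift _ (continuous_quot_mk.comp (f.cont.sumMap g.cont))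
  map_pt := by
    show Quot.mk _ (Sum.inl (f.toFun A.pt)) = Quot.mk _ (Sum.inl X.pt)
    rw [f.map_pt]

/-! ## Reduced suspension -/

/-- The defining relation for the reduced suspension. -/
inductive suspRel (A : PSp) : (unitInterval × A.carrier) → (unitInterval × A.carrier) → Prop
  | zero (a a' : A.carrier) : suspRel A (0, a) (0, a')
  | one (a a' : A.carrier) : suspRel A (1, a) (1, a')
  | base (t t' : unitInterval) : suspRel A (t, A.pt) (t', A.pt)

/-- The reduced suspension `Σ A`. -/
def Susp (A : PSp) : PSp := ⟨Quot (suspRel A), Quot.mk _ (0, A.pt)⟩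

/-- Functoriality of the reduced suspension. -/
def Susp.map {A B : PSp} (f : PMap A B) : PMap (Susp A) (Susp B) where
  toFun := Quot.lift (fun p => Quot.mk _ (p.1, f.toFun p.2))
    (by rintro _ _ (⟨a, a'⟩ | ⟨a, a'⟩ | ⟨t, t'⟩)
        · exact Quot.sound (suspRel.zero _ _)
        · exact Quot.sound (suspRel.one _ _)
        · show Quot.mk _ (t, f.toFun A.pt) = Quot.mk _ (t', f.toFun A.pt)
          rw [f.map_pt]; exact Quot.sound (suspRel.base t t'))
  cont := continuous_quot_lift _ (continuous_quot_mk.comp (continuous_fst.prodMk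
    (f.cont.comp continuous_snd)))
  map_pt := by
    show Quot.mk _ ((0 : unitInterval), f.toFun A.pt) = Quot.mk _ ((0 : unitInterval), B.pt)
    rw [f.map_pt]

namespace SuspComul

variable (A : PSp)

/-- Auxiliary function for the suspension comultiplication. -/
def aux (p : unitInterval × A.carrier) : (Wedge (Susp A) (Susp A)).carrier :=
  if (p.1 : ℝ) ≤ 1 / 2 then
    (Wedge.inl (Susp A) (Susp A)).toFun
      (Quot.mk _ (Set.projIcc (0 : ℝ) 1 zero_le_one (2 * (p.1 : ℝ)), p.2))
  else
    (Wedge.inr (Susp A) (Susp A)).toFun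
      (Quot.mk _ (Set.projIcc (0 : ℝ) 1 zero_le_one (2 * (p.1 : ℝ) - 1), p.2))

theorem aux_continuous : Continuous (aux A) := by
  apply Continuous.if_le
  · exact (Wedge.inl (Susp A) (Susp A)).cont.comp <| continuous_quot_mk.comp <|
      ((continuous_projIcc.comp ((continuous_const.mul continuous_subtype_val).comp
        continuous_fst)).prodMk continuous_snd)
  · exact (Wedge.inr (Susp A) (Susp A)).cont.comp <| continuous_quot_mk.comp <|
      ((continuous_projIcc.comp (((continuous_const.mul continuous_subtype_val).sub
        continuous_const).comp continuous_fst)).prodMk continuous_snd)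
  · exact continuous_subtype_val.comp continuous_fst
  · exact continuous_const
  · intro p hp
    have h2 : 2 * (p.1 : ℝ) = 1 := by rw [hp]; norm_num
    rw [h2, show (1 : ℝ) - 1 = 0 by norm_num]
    have e1 : Set.projIcc (0 : ℝ) 1 zero_le_one 1 = (1 : unitInterval) := by
      simp [Set.projIcc]
    have e0 : Set.projIcc (0 : ℝ) 1 zero_le_one 0 = (0 : unitInterval) := by
      simp [Set.projIcc]
    rw [e1, e0]
    have l1 : Quot.mk (suspRel A) (1, p.2) = Quot.mk _ ((0 : unitInterval), A.pt) := by
      exact (Quot.sound (suspRel.one p.2 A.pt)).trans (Quot.sound (suspRel.base 1 0))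
    have l2 : Quot.mk (suspRel A) (0, p.2) = Quot.mk _ ((0 : unitInterval), A.pt) :=
      Quot.sound (suspRel.zero p.2 A.pt)
    show (Wedge.inl (Susp A) (Susp A)).toFun (Quot.mk _ ((1 : unitInterval), p.2))
      = (Wedge.inr (Susp A) (Susp A)).toFun (Quot.mk _ ((0 : unitInterval), p.2))
    rw [show (Quot.mk _ ((1:unitInterval), p.2) : (Susp A).carrier) = (Susp A).pt from l1,
        show (Quot.mk _ ((0:unitInterval), p.2) : (Susp A).carrier) = (Susp A).pt from l2]
    rw [(Wedge.inl (Susp A) (Susp A)).map_pt, (Wedge.inr (Susp A) (Susp A)).map_pt]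

theorem aux_respects : ∀ p q, suspRel A p q → aux A p = aux A q := by
  rintro _ _ (⟨a, a'⟩ | ⟨a, a'⟩ | ⟨t, t'⟩)
  · show aux A (0, a) = aux A (0, a')
    have h0 : ((0 : unitInterval) : ℝ) ≤ 1 / 2 := by norm_num
    simp only [aux, if_pos h0]
    congr 1
    have : (2 : ℝ) * ((0 : unitInterval) : ℝ) = 0 := by norm_num
    rw [this]
    have e0 : Set.projIcc (0 : ℝ) 1 zero_le_one 0 = (0 : unitInterval) := by
      simp [Set.projIcc]
    rw [e0]
    exact Quot.sound (suspRel.zero a a')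
  · show aux A (1, a) = aux A (1, a')
    have h1 : ¬ ((1 : unitInterval) : ℝ) ≤ 1 / 2 := by norm_num
    simp only [aux, if_neg h1]
    congr 1
    have : (2 : ℝ) * ((1 : unitInterval) : ℝ) - 1 = 1 := by norm_num
    rw [this]
    have e1 : Set.projIcc (0 : ℝ) 1 zero_le_one 1 = (1 : unitInterval) := by
      simp [Set.projIcc]
    rw [e1]
    exact Quot.sound (suspRel.one a a')
  · show aux A (t, A.pt) = aux A (t', A.pt)
    have base_eq : ∀ s : unitInterval, aux A (s, A.pt) = (Wedge (Susp A) (Susp A)).pt := by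
      intro s
      by_cases hs : (s : ℝ) ≤ 1 / 2
      · simp only [aux, if_pos hs]
        rw [show (Quot.mk _ (Set.projIcc (0:ℝ) 1 zero_le_one (2 * (s:ℝ)), A.pt) :
              (Susp A).carrier) = (Susp A).pt from Quot.sound (suspRel.base _ _)]
        exact (Wedge.inl (Susp A) (Susp A)).map_pt
      · simp only [aux, if_neg hs]
        rw [show (Quot.mk _ (Set.projIcc (0:ℝ) 1 zero_le_one (2 * (s:ℝ) - 1), A.pt) :
              (Susp A).carrier) = (Susp A).pt from Quot.sound (suspRel.base _ _)]
        exact (Wedge.inr (Susp A) (Susp A)).map_pt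
    rw [base_eq t, base_eq t']

end SuspComul

/-- The suspension comultiplication `σ : Σ A → Σ A ∨ Σ A`. -/
def suspComul (A : PSp) : PMap (Susp A) (Wedge (Susp A) (Susp A)) where
  toFun := Quot.lift (SuspComul.aux A) (SuspComul.aux_respects A)
  cont := continuous_quot_lift _ (SuspComul.aux_continuous A)
  map_pt := by
    show SuspComul.aux A (0, A.pt) = (Wedge (Susp A) (Susp A)).pt
    have h0 : ((0 : unitInterval) : ℝ) ≤ 1 / 2 := by norm_num
    simp only [SuspComul.aux, if_pos h0]
    rw [show (Quot.mk _ (Set.projIcc (0:ℝ) 1 zero_le_one (2 * ((0 : unitInterval):ℝ)), A.pt) :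
          (Susp A).carrier) = (Susp A).pt from Quot.sound (suspRel.base _ _)]
    exact (Wedge.inl (Susp A) (Susp A)).map_pt

/-- The sum `f + g : Σ A → B ∨ D` of two maps defined on a suspension, namely the
composite of the suspension comultiplication with `f ∨ g`. -/
def PMap.wsum {A B D : PSp} (f : PMap (Susp A) B) (g : PMap (Susp A) D) :
    PMap (Susp A) (Wedge B D) :=
  (Wedge.map f g).comp (suspComul A)

/-! ## Mapping cones and homotopy cofibrations -/

/-- The defining relation for the reduced mapping cone of `f : A → B`. -/
inductive coneRel {A B : PSp} (f : PMap A B) :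
    ((unitInterval × A.carrier) ⊕ B.carrier) → ((unitInterval × A.carrier) ⊕ B.carrier) → Prop
  | zero (a a' : A.carrier) : coneRel f (Sum.inl (0, a)) (Sum.inl (0, a'))
  | base (t t' : unitInterval) : coneRel f (Sum.inl (t, A.pt)) (Sum.inl (t', A.pt))
  | glue (a : A.carrier) : coneRel f (Sum.inl (1, a)) (Sum.inr (f.toFun a))

/-- The reduced mapping cone (homotopy cofibre) of `f`. -/
def Cone {A B : PSp} (f : PMap A B) : PSp := ⟨Quot (coneRel f), Quot.mk _ (Sum.inr B.pt)⟩

/-- The canonical inclusion of `B` into the mapping cone of `f : A → B`. -/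
def Cone.incl {A B : PSp} (f : PMap A B) : PMap B (Cone f) :=
  ⟨fun b => Quot.mk _ (Sum.inr b), continuous_quot_mk.comp continuous_inr, rfl⟩

/-- `A →f B →j C` is a homotopy cofibration: `C` is identified with the mapping
cone of `f` by a pointed homotopy equivalence compatible with `j`. -/
def IsHomotopyCofib {A B C : PSp} (f : PMap A B) (j : PMap B C) : Prop :=
  ∃ e : PMap (Cone f) C, IsPHEquiv e ∧ PHomotopic (e.comp (Cone.incl f)) j

theorem isHomotopyCofib_cone {A B : PSp} (f : PMap A B) :
    IsHomotopyCofib f (Cone.incl f) :=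
  ⟨PMap.id _, isPHEquiv_id, PHomotopic.refl _⟩

/-! ## The left half-smash -/

/-- The defining relation for the left half-smash `A ⋉ B`. -/
inductive lsmashRel (A B : PSp) : (A.carrier × B.carrier) → (A.carrier × B.carrier) → Prop
  | collapse (a a' : A.carrier) : lsmashRel A B (a, B.pt) (a', B.pt)

/-- The left half-smash `A ⋉ B = (A × B) / (A × pt)`. -/
def LSmash (A B : PSp) : PSp := ⟨Quot (lsmashRel A B), Quot.mk _ (A.pt, B.pt)⟩

/-! ## Homotopy fibres and homotopy fibrations -/

/-- The underlying type of the homotopy fibre of `f : B → Z`. -/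
abbrev HFibType {B Z : PSp} (f : PMap B Z) : Type :=
  {p : B.carrier × C(unitInterval, Z.carrier) // f.toFun p.1 = p.2 0 ∧ p.2 1 = Z.pt}

/-- The homotopy fibre of a pointed map `f : B → Z`. -/
def HFib {B Z : PSp} (f : PMap B Z) : PSp :=
  ⟨HFibType f, ⟨(B.pt, ContinuousMap.const _ Z.pt), by simp [f.map_pt], rfl⟩⟩

/-- The canonical map from the homotopy fibre of `f` to its total space. -/
def HFib.incl {B Z : PSp} (f : PMap B Z) : PMap (HFib f) B where
  toFun := fun p => p.1.1
  cont := continuous_fst.comp continuous_subtype_val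
  map_pt := rfl

/-- The map of homotopy fibres induced by `u : B → B'` over `Z`, for a strictly
commuting triangle `h' ∘ u = h`. -/
def HFib.comap {B B' Z : PSp} (u : PMap B B') (h' : PMap B' Z) :
    PMap (HFib (h'.comp u)) (HFib h') where
  toFun := fun p => show HFibType h' from
    ⟨(u.toFun p.1.1, p.1.2), p.2.1, p.2.2⟩
  cont := by
    apply Continuous.subtype_mk
    exact ((u.cont.comp continuous_fst).prodMk continuous_snd).comp continuous_subtype_val
  map_pt := by
    apply Subtype.ext
    show (u.toFun B.pt, ContinuousMap.const _ Z.pt) = (B'.pt, ContinuousMap.const _ Z.pt)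
    rw [u.map_pt]

/-! ## Double mapping cylinders and homotopy pushouts -/

/-- The defining relation for the (reduced) double mapping cylinder of
`X ←p W →q C`. -/
inductive dcylRel {W X C : PSp} (p : PMap W X) (q : PMap W C) :
    (X.carrier ⊕ ((unitInterval × W.carrier) ⊕ C.carrier)) →
      (X.carrier ⊕ ((unitInterval × W.carrier) ⊕ C.carrier)) → Prop
  | left (w : W.carrier) : dcylRel p q (Sum.inl (p.toFun w)) (Sum.inr (Sum.inl (0, w)))
  | right (w : W.carrier) : dcylRel p q (Sum.inr (Sum.inl (1, w))) (Sum.inr (Sum.inr (q.toFun w)))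
  | base (t t' : unitInterval) :
      dcylRel p q (Sum.inr (Sum.inl (t, W.pt))) (Sum.inr (Sum.inl (t', W.pt)))

/-- The (reduced) double mapping cylinder of `X ←p W →q C`, a model for the
homotopy pushout. -/
def DCyl {W X C : PSp} (p : PMap W X) (q : PMap W C) : PSp :=
  ⟨Quot (dcylRel p q), Quot.mk _ (Sum.inl X.pt)⟩

/-- The canonical map `X → DCyl p q`. -/
def DCyl.inl {W X C : PSp} (p : PMap W X) (q : PMap W C) : PMap X (DCyl p q) :=
  ⟨fun x => Quot.mk _ (Sum.inl x), continuous_quot_mk.comp continuous_inl, rfl⟩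

/-- The canonical map `C → DCyl p q`. -/
def DCyl.inr {W X C : PSp} (p : PMap W X) (q : PMap W C) : PMap C (DCyl p q) where
  toFun := fun c => Quot.mk _ (Sum.inr (Sum.inr c))
  cont := continuous_quot_mk.comp (continuous_inr.comp continuous_inr)
  map_pt := by
    show Quot.mk _ (Sum.inr (Sum.inr C.pt)) = Quot.mk _ (Sum.inl X.pt)
    have h1 : Quot.mk (dcylRel p q) (Sum.inr (Sum.inr C.pt))
        = Quot.mk _ (Sum.inr (Sum.inl ((1 : unitInterval), W.pt))) := by
      conv_lhs => rw [← q.map_pt]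
      exact (Quot.sound (dcylRel.right W.pt)).symm
    have h2 : Quot.mk (dcylRel p q) (Sum.inr (Sum.inl ((1 : unitInterval), W.pt)))
        = Quot.mk _ (Sum.inr (Sum.inl ((0 : unitInterval), W.pt))) :=
      Quot.sound (dcylRel.base 1 0)
    have h3 : Quot.mk (dcylRel p q) (Sum.inr (Sum.inl ((0 : unitInterval), W.pt)))
        = Quot.mk _ (Sum.inl X.pt) := by
      conv_rhs => rw [← p.map_pt]
      exact (Quot.sound (dcylRel.left W.pt)).symm
    exact (h1.trans h2).trans h3

/-- `M`, together with `j : X → M` and `φ : C → M`, is a homotopy pushout of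
`X ←p W →q C`: it is identified with the double mapping cylinder by a pointed
homotopy equivalence compatible with the two canonical maps. -/
def IsHomotopyPushout {W X C M : PSp} (p : PMap W X) (q : PMap W C)
    (j : PMap X M) (φ : PMap C M) : Prop :=
  ∃ e : PMap (DCyl p q) M, IsPHEquiv e ∧
    PHomotopic (e.comp (DCyl.inl p q)) j ∧ PHomotopic (e.comp (DCyl.inr p q)) φ

/-! ## Spheres and finite wedges -/

/-- The `n`-sphere as a pointed space, modelled as an iterated reduced suspension
of `S⁰`. -/
def Sph : ℕ → PSp
  | 0 => ⟨Bool, true⟩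
  | (n + 1) => Susp (Sph n)

/-- The `k`-fold wedge power `⋁_{i=1}^k A`. -/
def wedgePow (A : PSp) : ℕ → PSp
  | 0 => PSpPt
  | (k + 1) => Wedge A (wedgePow A k)

/-- The inclusion of the `i`-th wedge summand into `⋁_{i=1}^k A`. -/
def wedgeIncl (A : PSp) : ∀ (k : ℕ), Fin k → PMap A (wedgePow A k)
  | 0, i => i.elim0
  | (k + 1), ⟨0, _⟩ => Wedge.inl A (wedgePow A k)
  | (k + 1), ⟨i + 1, h⟩ =>
      (Wedge.inr A (wedgePow A k)).comp (wedgeIncl A k ⟨i, Nat.lt_of_succ_lt_succ h⟩)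

/-! ## CW-complexes -/

universe u

namespace RelativeCWComplex

/-- The `n`-sphere (Mathlib, December 2024). -/
def sphere (n : ℤ) : TopCat.{u} :=
  TopCat.of <| ULift <| Metric.sphere (0 : EuclideanSpace ℝ <| Fin <| (n + 1).toNat) 1

/-- The `n`-disk (Mathlib, December 2024). -/
def disk (n : ℤ) : TopCat.{u} :=
  TopCat.of <| ULift <| Metric.closedBall (0 : EuclideanSpace ℝ <| Fin <| n.toNat) 1

/-- The inclusion map from the `n`-sphere to the `(n + 1)`-disk. -/
def sphereInclusion (n : ℤ) : sphere.{u} n ⟶ disk.{u} (n + 1) :=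
  TopCat.ofHom ⟨fun p => ⟨⟨p.down.1, le_of_eq p.down.2⟩⟩,
    continuous_uliftUp.comp ((continuous_subtype_val.comp continuous_uliftDown).subtype_mk _)⟩

/-- `X'` is obtained from `X` by attaching generalized cells `f : S ⟶ D`. -/
structure AttachGeneralizedCells {S D : TopCat.{u}} (f : S ⟶ D) (X X' : TopCat.{u}) where
  cells : Type u
  attachMaps : cells → (S ⟶ X)
  iso_pushout : X' ≅ Limits.pushout (Limits.Sigma.desc attachMaps)
    (Limits.Sigma.map fun (_ : cells) => f)

/-- `X'` is obtained from `X` by attaching `(n + 1)`-disks. -/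
def AttachCells (n : ℤ) := AttachGeneralizedCells (sphereInclusion.{u} n)

end RelativeCWComplex

/-- A relative CW-complex (Mathlib, December 2024). -/
structure RelativeCWComplex where
  sk : ℕ → TopCat.{u}
  attachCells (n : ℕ) : RelativeCWComplex.AttachCells ((n : ℤ) - 1) (sk n) (sk (n + 1))

/-- A CW-complex (Mathlib, December 2024). -/
structure CWComplex extends RelativeCWComplex.{u} where
  isEmpty_sk_zero : IsEmpty (sk 0)

namespace RelativeCWComplex

/-- The inclusion `X ⟶ X'` for an attachment of generalized cells. -/
def AttachGeneralizedCells.inclusion {S D : TopCat.{u}} {f : S ⟶ D} {X X' : TopCat.{u}}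
    (c : AttachGeneralizedCells f X X') : X ⟶ X' :=
  Limits.pushout.inl _ _ ≫ c.iso_pushout.inv

/-- The inclusion of consecutive skeleta. -/
def inclusion (X : RelativeCWComplex.{u}) (n : ℕ) : X.sk n ⟶ X.sk (n + 1) :=
  AttachGeneralizedCells.inclusion (X.attachCells n)

/-- The topology on a relative CW-complex. -/
def toTopCat (X : RelativeCWComplex.{u}) : TopCat.{u} :=
  Limits.colimit (Functor.ofSequence X.inclusion)

end RelativeCWComplex

/-- A pointed space has the homeomorphism type of a CW-complex. -/
def IsCWSpace (A : PSp) : Prop :=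
  ∃ K : CWComplex.{0}, Nonempty (K.toRelativeCWComplex.toTopCat ≃ₜ A.carrier)

/-- A CW-complex is finite if it has finitely many cells, all in a bounded range
of dimensions. -/
def CWComplex.IsFiniteCW (K : CWComplex.{0}) : Prop :=
  (∀ m : ℕ, Finite ((K.attachCells m).cells)) ∧
    ∃ N : ℕ, ∀ m : ℕ, N ≤ m → IsEmpty ((K.attachCells m).cells)

/-- A pointed space has the homeomorphism type of a finite CW-complex. -/
def IsFiniteCWSpace (A : PSp) : Prop :=
  ∃ K : CWComplex.{0}, K.IsFiniteCW ∧ Nonempty (K.toRelativeCWComplex.toTopCat ≃ₜ A.carrier)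

/-! ## Singular homology and cohomology -/

open scoped Topology

/-- The singular chain complex functor, defined via the free simplicial
`ℤ`-module on the singular simplicial set. -/
def singularChains : TopCat.{0} ⥤ ChainComplex (ModuleCat.{0} ℤ) ℕ :=
  TopCat.toSSet ⋙ ((SimplicialObject.whiskering _ _).obj (ModuleCat.free ℤ)) ⋙
    alternatingFaceMapComplex _

/-- The `n`-th singular homology functor with integer coefficients. -/
def SHfun (n : ℕ) : TopCat.{0} ⥤ ModuleCat.{0} ℤ :=
  singularChains ⋙ HomologicalComplex.homologyFunctor _ _ n

/-- The `n`-th singular homology group `H_n(A; ℤ)` of a pointed space. -/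
def SH (n : ℕ) (A : PSp) : Type := (SHfun n).obj (TopCat.of A.carrier)

instance (n : ℕ) (A : PSp) : AddCommGroup (SH n A) := by unfold SH; infer_instance
instance (n : ℕ) (A : PSp) : Module ℤ (SH n A) := by unfold SH; infer_instance

/-- The contravariant `ℤ`-linear duality functor `M ↦ Hom_ℤ(M, ℤ)`. -/
def dualFunctor : (ModuleCat.{0} ℤ)ᵒᵖ ⥤ ModuleCat.{0} ℤ :=
  (linearYoneda ℤ (ModuleCat.{0} ℤ)).obj (ModuleCat.of ℤ ℤ)

instance : dualFunctor.Additive := by unfold dualFunctor; infer_instance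

/-- The singular cochain complex functor (the `ℤ`-linear dual of the singular
chain complex). -/
def singularCochains :
    TopCat.{0}ᵒᵖ ⥤ HomologicalComplex (ModuleCat.{0} ℤ) (ComplexShape.down ℕ).symm :=
  singularChains.op ⋙ HomologicalComplex.opFunctor _ _ ⋙ dualFunctor.mapHomologicalComplex _

/-- The `n`-th singular cohomology functor with integer coefficients. -/
def SCohfun (n : ℕ) : TopCat.{0}ᵒᵖ ⥤ ModuleCat.{0} ℤ :=
  singularCochains ⋙ HomologicalComplex.homologyFunctor _ _ n

/-- The `n`-th singular cohomology group `H^n(A; ℤ)` of a pointed space. -/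
def SCoh (n : ℕ) (A : PSp) : Type := (SCohfun n).obj (Opposite.op (TopCat.of A.carrier))

instance (n : ℕ) (A : PSp) : AddCommGroup (SCoh n A) := by unfold SCoh; infer_instance
instance (n : ℕ) (A : PSp) : Module ℤ (SCoh n A) := by unfold SCoh; infer_instance

/-- The morphism of `TopCat` underlying a pointed map. -/
def PMap.toTop {A B : PSp} (f : PMap A B) : TopCat.of A.carrier ⟶ TopCat.of B.carrier :=
  TopCat.ofHom f.toC

/-- The map induced on singular cohomology by a pointed map. -/
def SCohMap (n : ℕ) {A B : PSp} (f : PMap A B) : SCoh n B → SCoh n A :=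
  fun z => ((SCohfun n).map (Opposite.op f.toTop)) z

/-! ## Connectivity and rational homotopy -/

/-- A pointed space is `k`-connected if its homotopy groups vanish in degrees
`≤ k`. -/
def KConn (k : ℕ) (A : PSp) : Prop :=
  ∀ i : ℕ, i ≤ k → Subsingleton (HomotopyGroup (Fin i) A.carrier A.pt)

/-- The rationalized `(n+2)`-nd homotopy group `π_{n+2}(A) ⊗ ℚ`. -/
def ratPi (A : PSp) (n : ℕ) : Type :=
  TensorProduct ℤ ℚ (Additive (HomotopyGroup (Fin (n + 2)) A.carrier A.pt))

instance (A : PSp) (n : ℕ) : AddCommGroup (ratPi A n) := by unfold ratPi; infer_instance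
instance (A : PSp) (n : ℕ) : Module ℚ (ratPi A n) := by unfold ratPi; infer_instance

/-- A simply connected pointed space is rationally elliptic if
`dim (π_*(A) ⊗ ℚ) < ∞`. -/
def RatElliptic (A : PSp) : Prop :=
  (∀ n : ℕ, Module.Finite ℚ (ratPi A n)) ∧ {n : ℕ | Nontrivial (ratPi A n)}.Finite

/-- A simply connected pointed space is rationally hyperbolic if it is not
rationally elliptic. -/
def RatHyperbolic (A : PSp) : Prop := ¬ RatElliptic A

/-! ## Complexes with a single top cell, and connected sums -/

/-- A pointed space presented as an `n`-dimensional complex with a single top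
cell: a codimension-one skeleton `skel`, together with an attaching map
`attach : S^{n-1} → skel` (the `(n-1)`-sphere being written as `Σ S^{n-2}`)
whose homotopy cofibre is the given space. -/
structure CellTop (n : ℕ) extends PSp where
  skel : PSp
  attach : PMap (Susp (Sph (n - 2))) skel
  incl : PMap skel toPSp
  cofib : IsHomotopyCofib attach incl

/-- The connected sum of two `n`-dimensional complexes with single top cells:
the homotopy cofibre of the sum `f_M + f_N : S^{n-1} → skel_M ∨ skel_N` of the
two attaching maps. -/
def ConnSum {n : ℕ} (M N : CellTop n) : CellTop n where
  toPSp := Cone (PMap.wsum M.attach N.attach)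
  skel := Wedge M.skel N.skel
  attach := PMap.wsum M.attach N.attach
  incl := Cone.incl _
  cofib := isHomotopyCofib_cone _

/-- The iterated connected sum of a nonempty collection
`M :: L` of `n`-dimensional complexes with single top cells. -/
def connSumAll {n : ℕ} : CellTop n → List (CellTop n) → CellTop n
  | M, [] => M
  | M, (N :: L) => ConnSum M (connSumAll N L)

/-! ## Poincaré duality complexes -/

/-- A Poincaré duality complex of dimension `n`: a finite, simply connected
pointed CW-complex, presented with a single top cell attached to its
codimension-one skeleton, whose integral cohomology satisfies Poincaré duality:
it carries a cup product, a fundamental cohomology class generating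
`H^n ≅ ℤ`, cohomology vanishes above dimension `n`, and cohomology in degree
`k` is isomorphic to homology in degree `n - k`. -/
structure PDComplex (n : ℕ) extends CellTop n where
  simplyConn : SimplyConnectedSpace carrier
  finiteCW : IsFiniteCWSpace toPSp
  cup : ∀ i j : ℕ, SCoh i toPSp →ₗ[ℤ] SCoh j toPSp →ₗ[ℤ] SCoh (i + j) toPSp
  fund : SCoh n toPSp
  fund_gen : ∀ z : SCoh n toPSp, ∃! m : ℤ, z = m • fund
  vanish : ∀ k : ℕ, n < k → Subsingleton (SCoh k toPSp)
  duality : ∀ k : ℕ, k ≤ n → Nonempty (SCoh k toPSp ≃ₗ[ℤ] SH (n - k) toPSp)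

/-- Compatibility of the pinch map with `j ∨ 1`. -/
theorem p1_comp_wedgeMap {X Y M : PSp} (j : PMap X M) :
    (Wedge.p1 M Y).comp (Wedge.map j (PMap.id Y)) = j.comp (Wedge.p1 X Y) := by
  apply PMap.ext
  funext w
  induction w using Quot.ind with
  | _ s =>
    cases s with
    | inl x =>
      show (Wedge.p1 M Y).toFun ((Wedge.map j (PMap.id Y)).toFun (Quot.mk _ (Sum.inl x)))
        = j.toFun ((Wedge.p1 X Y).toFun (Quot.mk _ (Sum.inl x)))
      have h1 : (Wedge.map j (PMap.id Y)).toFun (Quot.mk _ (Sum.inl x))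
          = Quot.mk _ (Sum.inl (j.toFun x)) := rfl
      rw [h1]
      rfl
    | inr y =>
      show (Wedge.p1 M Y).toFun ((Wedge.map j (PMap.id Y)).toFun (Quot.mk _ (Sum.inr y)))
        = j.toFun ((Wedge.p1 X Y).toFun (Quot.mk _ (Sum.inr y)))
      have h1 : (Wedge.map j (PMap.id Y)).toFun (Quot.mk _ (Sum.inr y))
          = Quot.mk _ (Sum.inr y) := rfl
      rw [h1]
      show M.pt = j.toFun X.pt
      exact j.map_pt.symm

/-- Transport of homotopy fibres along an equality of maps. -/
def HFib.cast {B Z : PSp} {h h' : PMap B Z} (e : h = h') : PMap (HFib h) (HFib h') :=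
  e ▸ PMap.id (HFib h)

end

/-! Because `p₁ ∘ h` is null homotopic, the pinch map `p₁ : B ∨ C → B` extends over the
mapping cone of `h`, hence, up to homotopy, over the cofibre `D`: there is `r : D → B` with
`r ∘ j ≃ p₁`. Precomposing with the inclusion `B → B ∨ C` gives `r ∘ j ∘ inl ≃ p₁ ∘ inl = 1`. -/

namespace PHomotopic

variable {A B C : PSp}

theorem symm {f g : PMap A B} (hfg : PHomotopic f g) : PHomotopic g f :=
  ContinuousMap.HomotopicRel.symm hfg

theorem trans {f g k : PMap A B} (hfg : PHomotopic f g) (hgk : PHomotopic g k) :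
    PHomotopic f k :=
  ContinuousMap.HomotopicRel.trans hfg hgk

instance : @Trans (PMap A B) (PMap A B) (PMap A B) PHomotopic PHomotopic PHomotopic :=
  ⟨trans⟩

theorem postcomp (k : PMap B C) {f g : PMap A B} (hfg : PHomotopic f g) :
    PHomotopic (k.comp f) (k.comp g) :=
  hfg.comp_continuousMap k.toC

theorem precomp {f g : PMap B C} (hfg : PHomotopic f g) (k : PMap A B) :
    PHomotopic (f.comp k) (g.comp k) := by
  obtain ⟨H⟩ := hfg
  refine ⟨⟨H.toHomotopy.comp (ContinuousMap.Homotopy.refl k.toC), ?_⟩⟩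
  rintro t x rfl
  show H (t, k.toFun A.pt) = f.toFun (k.toFun A.pt)
  rw [k.map_pt]
  exact H.eq_fst t rfl

end PHomotopic

namespace Cone

variable {A B X : PSp} {f : PMap A B}

/-- The cone coordinate runs the null homotopy backwards, so that the end `t = 1`, glued to
`B` along `f`, sees `k ∘ f`, while the end `t = 0` is collapsed to the basepoint. -/
def desc (k : PMap B X)
    (H : ContinuousMap.HomotopyRel (k.comp f).toC (PMap.const A X).toC {A.pt}) :
    PMap (Cone f) X where
  toFun := Quot.lift (Sum.elim (fun p => H (σ p.1, p.2)) k.toFun) <| by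
    rintro _ _ (⟨a, a'⟩ | ⟨t, t'⟩ | ⟨a⟩)
    · show H (σ 0, a) = H (σ 0, a')
      rw [unitInterval.symm_zero, H.apply_one, H.apply_one]
      rfl
    · show H (σ t, A.pt) = H (σ t', A.pt)
      rw [H.eq_fst _ rfl, H.eq_fst _ rfl]
    · show H (σ 1, a) = k.toFun (f.toFun a)
      rw [unitInterval.symm_one, H.apply_zero]
      rfl
  cont := continuous_quot_lift _ <| Continuous.sumElim
    (H.continuous.comp <| (unitInterval.continuous_symm.comp continuous_fst).prodMk
      continuous_snd)
    k.cont
  map_pt := k.map_pt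

theorem desc_comp_incl (k : PMap B X)
    (H : ContinuousMap.HomotopyRel (k.comp f).toC (PMap.const A X).toC {A.pt}) :
    (desc k H).comp (incl f) = k :=
  rfl

theorem exists_extension_of_null {k : PMap B X}
    (hk : PHomotopic (k.comp f) (PMap.const A X)) :
    ∃ r : PMap (Cone f) X, r.comp (incl f) = k :=
  let ⟨H⟩ := hk
  ⟨desc k H, desc_comp_incl k H⟩

end Cone

theorem IsHomotopyCofib.exists_extension_of_null {A B C X : PSp} {f : PMap A B}
    {j : PMap B C} (hfj : IsHomotopyCofib f j) {k : PMap B X}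
    (hk : PHomotopic (k.comp f) (PMap.const A X)) :
    ∃ r : PMap C X, PHomotopic (r.comp j) k := by
  obtain ⟨e, ⟨g, hge, -⟩, hej⟩ := hfj
  obtain ⟨r, rfl⟩ := Cone.exists_extension_of_null hk
  refine ⟨r.comp g, ?_⟩
  calc PHomotopic ((r.comp g).comp j) ((r.comp g).comp (e.comp (Cone.incl f))) :=
        hej.symm.postcomp (r.comp g)
    PHomotopic _ (r.comp ((PMap.id (Cone f)).comp (Cone.incl f))) :=
        (hge.precomp (Cone.incl f)).postcomp r

theorem retract_of_null_pinch_general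
    (A B C D : PSp)
    (h : PMap A (Wedge B C)) (jD : PMap (Wedge B C) D)
    (hcofib : IsHomotopyCofib h jD)
    (hnull : PHomotopic ((Wedge.p1 B C).comp h) (PMap.const A B)) :
    ∃ (s : PMap B D) (rmap : PMap D B),
      PHomotopic (rmap.comp s) (PMap.id B) := by
  obtain ⟨r, hr⟩ := hcofib.exists_extension_of_null hnull
  exact ⟨jD.comp (Wedge.inl B C), r, hr.precomp (Wedge.inl B C)⟩

/-- Let `A →h B ∨ C → D` be a homotopy cofibration of simply
connected pointed CW-complexes. If the composition of `h` with the pinch map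
`p₁ : B ∨ C → B` is null homotopic, then `B` is a homotopy retract of `D`: there are
maps `B → D` and `D → B` whose composite is homotopic to the identity. -/
theorem retract_of_null_pinch
    (A B C D : PSp)
    (hA : IsCWSpace A) (hB : IsCWSpace B) (hC : IsCWSpace C) (hD : IsCWSpace D)
    (hAs : SimplyConnectedSpace A.carrier) (hBs : SimplyConnectedSpace B.carrier)
    (hCs : SimplyConnectedSpace C.carrier) (hDs : SimplyConnectedSpace D.carrier)
    (h : PMap A (Wedge B C)) (jD : PMap (Wedge B C) D)
    (hcofib : IsHomotopyCofib h jD)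
    (hnull : PHomotopic ((Wedge.p1 B C).comp h) (PMap.const A B)) :
    ∃ (s : PMap B D) (rmap : PMap D B),
      PHomotopic (rmap.comp s) (PMap.id B) :=
  retract_of_null_pinch_general A B C D h jD hcofib hnull
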